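/- Let M be a von Neumann algebra, B a C*-algebra, and T : M → B a (not necessarily linear) 2-local triple homomorphism. Let e ∈ M be a tripotent, y ∈ M with {e,e,y} = (1/2)y, and z ∈ M with {e,e,z} = 0. Then T(λ e + y + z) = λ T(e) + T(y) + T(z) for every λ ∈ ℂ; in particular T(y + z) = T(y) + T(z). -/

import Mathlib

/-- The triple product `{x,y,z} = (1/2)(x y* z + z y* x)` on a C*-algebra. -/
noncomputable def tp {A : Type*} [NonUnitalCStarAlgebra A] (x y z : A) : A :=
  (2⁻¹ : ℂ) • (x * star y * z + z * star y * x)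

/-- A bounded linear map between C*-algebras is a triple homomorphism if it preserves
the triple product. -/
def IsTripleHom {A B : Type*} [NonUnitalCStarAlgebra A] [NonUnitalCStarAlgebra B]
    (Φ : A →L[ℂ] B) : Prop :=
  ∀ x y z : A, Φ (tp x y z) = tp (Φ x) (Φ y) (Φ z)

/-- A (not necessarily linear nor continuous) map `T : A → B` is a 2-local triple
homomorphism if for every `a b : A` there is a bounded linear triple homomorphism
`Φ : A →L[ℂ] B` agreeing with `T` at `a` and at `b`. -/
def Is2LocalTripleHom {A B : Type*} [NonUnitalCStarAlgebra A] [NonUnitalCStarAlgebra B]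
    (T : A → B) : Prop :=
  ∀ a b : A, ∃ Φ : A →L[ℂ] B, IsTripleHom Φ ∧ Φ a = T a ∧ Φ b = T b

section VonNeumannSetup

variable {H : Type*} [NormedAddCommGroup H] [InnerProductSpace ℂ H] [CompleteSpace H]

instance VonNeumannAlgebra.instSMulMemClass :
    SMulMemClass (VonNeumannAlgebra H) ℂ (H →L[ℂ] H) where
  smul_mem {s} c m hm := s.toStarSubalgebra.smul_mem hm c

/-- A von Neumann algebra is norm closed in `H →L[ℂ] H` (being a double centralizer). -/
instance VonNeumannAlgebra.instIsClosedCoe (M : VonNeumannAlgebra H) :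
    IsClosed (M : Set (H →L[ℂ] H)) := by
  have key : ∀ s : Set (H →L[ℂ] H), IsClosed (Set.centralizer s) := fun s => by
    have h : Set.centralizer s = ⋂ g ∈ s, {z : H →L[ℂ] H | g * z = z * g} := by
      ext z; simp [Set.mem_centralizer_iff]
    rw [h]
    exact isClosed_biInter fun g _ =>
      isClosed_eq (continuous_const.mul continuous_id) (continuous_id.mul continuous_const)
  rw [← M.centralizer_centralizer]
  exact key _

/-- A von Neumann algebra is in particular a (unital) C*-algebra. -/
noncomputable example (M : VonNeumannAlgebra H) : CStarAlgebra M := inferInstance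

end VonNeumannSetup

/-!
Write `f = T e`. If `x` has no Peirce-2 component relative to `e`, then `l ↦ T (l e + x) - l f`
is bounded by `‖x‖` (triple homomorphisms are contractive), and two of its values differ by
`(l - m) (Φ e - f)` for some triple homomorphism `Φ`. As `Φ e` is a tripotent with
`P₂(f) (Φ e) = f`, the difference `Φ e - f` is a tripotent orthogonal to `f`, hence of norm `0`
or `1`. A bounded map on `ℂ` whose values are either equal or exactly `|l - m|` apart is
constant, so `T (l e + x) = l f + T x`.

This applies to `x = y, z, y + z`. A triple homomorphism `Φ` agreeing with `T` at `l e + z` and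
`l e + y + z` then sends `l e + z` to `l f + T z` and `y` to `T (y + z) - T z`; comparing the
coefficients of `l²` in `Φ {l e + z, l e + z, y} = {Φ (l e + z), Φ (l e + z), Φ y}` gives
`T (y + z) - T z ∈ B₁(f)`, and in the same way `T (y + z) - T y ∈ B₀(f)`. Since also
`T y ∈ B₁(f)` and `T z ∈ B₀(f)`, the defect `T (y + z) - T y - T z` lies in
`B₁(f) ∩ B₀(f) = 0`.
-/

section Tripotent

variable {R : Type*} [NonUnitalRing R] [StarRing R] {f d : R}

lemma isIdempotentElem_mul_star_of_tripotent (hf : f * star f * f = f) :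
    IsIdempotentElem (f * star f) := by
  rw [IsIdempotentElem, ← mul_assoc, hf]

lemma isIdempotentElem_star_mul_of_tripotent (hf : f * star f * f = f) :
    IsIdempotentElem (star f * f) := by
  rw [IsIdempotentElem, mul_assoc, ← mul_assoc f, hf]

lemma star_mul_mul_star_of_tripotent (hf : f * star f * f = f) :
    star f * (f * star f) = star f := by
  simpa only [star_mul, star_star, mul_assoc] using congrArg star hf

lemma tripotent_of_tripotent_add (hf : f * star f * f = f)
    (hfd : f * star f * d = 0) (hdf : d * (star f * f) = 0)
    (hsum : (f + d) * star (f + d) * (f + d) = f + d) :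
    d * star d * d = d := by
  have h₁ : d * star f = 0 := by
    rw [← star_mul_mul_star_of_tripotent hf, ← mul_assoc (star f), ← mul_assoc d, hdf,
      zero_mul]
  have h₂ : star d * f = 0 := by
    have h : star f * d = 0 := by
      rw [← star_mul_mul_star_of_tripotent hf, mul_assoc, hfd, mul_zero]
    simpa only [star_mul, star_star, star_zero] using congrArg star h
  have h₃ : f * star d = 0 := by
    simpa only [star_mul, star_star, star_zero] using congrArg star h₁
  simp only [star_add, mul_add, add_mul, hf, hfd, h₁, h₃, mul_zero, mul_assoc d (star d) f,
    h₂, add_zero, zero_add] at hsum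
  exact add_left_cancel hsum

end Tripotent

section TripleProduct

variable {A : Type*} [NonUnitalCStarAlgebra A]

lemma tp_self_self_self (x : A) : tp x x x = x * star x * x := by
  rw [tp, ← two_smul ℂ, smul_smul]
  norm_num

lemma tp_self_self (f w : A) :
    tp f f w = (2⁻¹ : ℂ) • (f * star f * w + w * (star f * f)) := by
  rw [tp, mul_assoc w]

lemma tp_add_right (x y z z' : A) : tp x y (z + z') = tp x y z + tp x y z' := by
  simp only [tp, add_mul, mul_add]
  module

lemma tp_zero_right (x y : A) : tp x y 0 = 0 := by
  simp only [tp, mul_zero, zero_mul, add_zero, smul_zero]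

lemma tp_sub_right (x y z z' : A) : tp x y (z - z') = tp x y z - tp x y z' := by
  simp only [tp, sub_mul, mul_sub]
  module

lemma tp_smul_right (c : ℂ) (x y z : A) : tp x y (c • z) = c • tp x y z := by
  simp only [tp, smul_mul_assoc, mul_smul_comm]
  module

lemma tp_ofReal_smul_add (r : ℝ) (u s x : A) :
    tp ((r : ℂ) • u + s) ((r : ℂ) • u + s) x
      = ((r ^ 2 : ℝ) : ℂ) • tp u u x + (r : ℂ) • (tp u s x + tp s u x) + tp s s x := by
  simp only [tp, star_add, star_smul, Complex.star_def, Complex.conj_ofReal, add_mul, mul_add,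
    smul_mul_assoc, mul_smul_comm]
  push_cast
  module

/-- The Peirce-2 projection `P₂(f)` when `f` is a tripotent. -/
def peirce2 (f : A) : A →ₗ[ℂ] A where
  toFun w := f * star f * w * (star f * f)
  map_add' _ _ := by simp only [mul_add, add_mul]
  map_smul' _ _ := by simp only [mul_smul_comm, smul_mul_assoc, RingHom.id_apply]

lemma peirce2_apply (f w : A) : peirce2 f w = f * star f * w * (star f * f) := rfl

lemma peirce2_self {f : A} (hf : f * star f * f = f) : peirce2 f f = f := by
  rw [peirce2_apply, hf, ← mul_assoc, hf]

/-- `tp f f (tp f f w) = ½ tp f f w` says that `w` lies in `A₀(f) + A₁(f)`. -/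
lemma peirce2_eq_zero_of_tp_tp {f w : A} (hf : f * star f * f = f)
    (h : tp f f (tp f f w) = (2⁻¹ : ℂ) • tp f f w) : peirce2 f w = 0 := by
  have hu : f * star f * (f * star f * w + w * (star f * f))
      + (f * star f * w + w * (star f * f)) * (star f * f) = f * star f * w + w * (star f * f) := by
    rw [tp_self_self f w, tp_smul_right, tp_self_self] at h
    simp only [smul_smul] at h
    exact smul_right_injective A (by norm_num) h
  set p := f * star f
  set q := star f * f
  have hp : p * (p * w) = p * w := by
    rw [← mul_assoc, (isIdempotentElem_mul_star_of_tripotent hf).eq]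
  have hq : w * q * q = w * q := by
    rw [mul_assoc, (isIdempotentElem_star_mul_of_tripotent hf).eq]
  have h2 : (2 : ℂ) • (p * w * q) = 0 := by
    rw [mul_add, add_mul, hp, hq, ← mul_assoc] at hu
    rw [two_smul]
    exact add_eq_left.mp ((by abel : _ = _).trans hu)
  simpa [peirce2_apply] using h2

lemma tp_tp_add_of_peirce {e y z : A} (hy : tp e e y = (2⁻¹ : ℂ) • y) (hz : tp e e z = 0) :
    tp e e (tp e e (y + z)) = (2⁻¹ : ℂ) • tp e e (y + z) := by
  rw [tp_add_right, hy, hz, add_zero, tp_smul_right, hy]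

end TripleProduct

section Norm

variable {A B : Type*} [NonUnitalCStarAlgebra A] [NonUnitalCStarAlgebra B]

lemma norm_mul_star_mul_self (x : A) : ‖x * star x * x‖ = ‖x‖ ^ 3 := by
  refine le_antisymm ?_ ?_
  · calc ‖x * star x * x‖ ≤ ‖x * star x‖ * ‖x‖ := norm_mul_le _ _
      _ = ‖x‖ ^ 3 := by rw [CStarRing.norm_self_mul_star]; ring
  · rcases (norm_nonneg x).eq_or_lt with hx | hx
    · rw [← hx]; simp
    have h : ‖x‖ ^ 3 * ‖x‖ ≤ ‖x * star x * x‖ * ‖x‖ :=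
      calc ‖x‖ ^ 3 * ‖x‖ = ‖star (x * star x) * (x * star x)‖ := by
            rw [CStarRing.norm_star_mul_self, CStarRing.norm_self_mul_star]; ring
        _ = ‖x * star x * x * star x‖ := by
            rw [star_mul, star_star, ← mul_assoc]
        _ ≤ ‖x * star x * x‖ * ‖x‖ := by
            rw [← norm_star x]; exact norm_mul_le _ _
    exact le_of_mul_le_mul_right h hx

lemma norm_eq_zero_or_one_of_tripotent {k : A} (hk : k * star k * k = k) :
    ‖k‖ = 0 ∨ ‖k‖ = 1 := by
  have h := norm_mul_star_mul_self k
  rw [hk] at h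
  have : ‖k‖ * (‖k‖ - 1) * (‖k‖ + 1) = 0 := by linear_combination -h
  rcases mul_eq_zero.mp this with h' | h'
  · rcases mul_eq_zero.mp h' with h'' | h''
    · exact .inl h''
    · exact .inr (by linarith)
  · nlinarith [norm_nonneg k]

lemma IsTripleHom.map_mul_star_mul_self {Φ : A →L[ℂ] B} (hΦ : IsTripleHom Φ) (x : A) :
    Φ (x * star x * x) = Φ x * star (Φ x) * Φ x := by
  simpa only [tp_self_self_self] using hΦ x x x

/-- The cube root of `‖Φ‖` is a bound for `Φ`, because `Φ` commutes with `x ↦ x x* x` and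
`‖x x* x‖ = ‖x‖³`; hence `‖Φ‖³ ≤ ‖Φ‖`. -/
lemma IsTripleHom.opNorm_le_one {Φ : A →L[ℂ] B} (hΦ : IsTripleHom Φ) : ‖Φ‖ ≤ 1 := by
  set c := ‖Φ‖ ^ (3⁻¹ : ℝ)
  have hc : c ^ 3 = ‖Φ‖ := by
    rw [← Real.rpow_natCast, ← Real.rpow_mul (norm_nonneg _)]
    norm_num
  have hbound : ‖Φ‖ ≤ c := Φ.opNorm_le_bound (by positivity) fun x => by
    refine le_of_pow_le_pow_left₀ three_ne_zero (by positivity) ?_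
    calc ‖Φ x‖ ^ 3 = ‖Φ (x * star x * x)‖ := by
          rw [hΦ.map_mul_star_mul_self, norm_mul_star_mul_self]
      _ ≤ ‖Φ‖ * ‖x * star x * x‖ := Φ.le_opNorm _
      _ = (c * ‖x‖) ^ 3 := by rw [norm_mul_star_mul_self, mul_pow, hc]
  have h3 : ‖Φ‖ ^ 3 ≤ ‖Φ‖ := hc ▸ pow_le_pow_left₀ (norm_nonneg _) hbound 3
  by_contra! h
  linarith [pow_one ‖Φ‖ ▸ pow_lt_pow_right₀ h (by norm_num : 1 < 3)]

lemma IsTripleHom.norm_map_le {Φ : A →L[ℂ] B} (hΦ : IsTripleHom Φ) (x : A) :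
    ‖Φ x‖ ≤ ‖x‖ :=
  (Φ.le_opNorm x).trans (mul_le_of_le_one_left (norm_nonneg x) hΦ.opNorm_le_one)

end Norm

section Corner

variable {B : Type*} [NonUnitalCStarAlgebra B] {f k : B}

lemma mul_star_mul_self_eq_of_peirce2_eq [PartialOrder B] [StarOrderedRing B]
    (hf : f * star f * f = f) (hk : ‖k‖ ≤ 1) (hc : peirce2 f k = f) :
    k * (star f * f) = f := by
  set q := star f * f
  have hfk : star f * (k * q) = q :=
    calc star f * (k * q) = star f * (f * star f) * (k * q) := by
          rw [star_mul_mul_star_of_tripotent hf]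
      _ = star f * (f * star f * k * q) := by simp only [mul_assoc]
      _ = q := by rw [← peirce2_apply, hc]
  have hkf : star (k * q) * f = q := by
    simpa only [star_mul, star_star, mul_assoc, q] using congrArg star hfk
  have hkq : star (k * q) * (k * q) ≤ q :=
    calc star (k * q) * (k * q) = star q * (star k * k) * q := by
          simp only [star_mul, mul_assoc]
      _ ≤ ‖star k * k‖ • (star q * q) :=
          CStarAlgebra.star_left_conjugate_le_norm_smul (.star_mul_self k)
      _ ≤ q := by
          rw [star_mul, star_star, (isIdempotentElem_star_mul_of_tripotent hf).eq]
          refine smul_le_of_le_one_left (star_mul_self_nonneg f) ?_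
          rw [CStarRing.norm_star_mul_self]
          nlinarith [norm_nonneg k]
  -- `(k q - f)* (k q - f) = q k* k q - q ≤ 0`
  have ha : star (k * q - f) * (k * q - f) = 0 := by
    refine le_antisymm ?_ (star_mul_self_nonneg _)
    rw [star_sub, sub_mul, mul_sub, mul_sub, hfk, hkf, show star f * f = q from rfl, sub_self,
      sub_zero, sub_nonpos]
    exact hkq
  exact sub_eq_zero.mp ((CStarRing.star_mul_self_eq_zero_iff _).mp ha)

lemma mul_star_self_mul_eq_of_peirce2_eq [PartialOrder B] [StarOrderedRing B]
    (hf : f * star f * f = f) (hk : ‖k‖ ≤ 1) (hc : peirce2 f k = f) :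
    f * star f * k = f := by
  have hf' : star f * star (star f) * star f = star f := by
    simpa only [star_mul, star_star, mul_assoc] using congrArg star hf
  have hc' : peirce2 (star f) (star k) = star f := by
    simpa only [peirce2_apply, star_mul, star_star, mul_assoc] using congrArg star hc
  simpa only [star_mul, star_star, mul_assoc] using
    congrArg star (mul_star_mul_self_eq_of_peirce2_eq hf' (by rwa [norm_star]) hc')

/-- A tripotent `k` with `P₂(f) k = f` is `f` plus a tripotent orthogonal to `f`. -/
lemma eq_or_norm_sub_eq_one_of_peirce2_eq (hf : f * star f * f = f) (hk : k * star k * k = k)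
    (hc : peirce2 f k = f) : k = f ∨ ‖k - f‖ = 1 := by
  let := CStarAlgebra.spectralOrder B
  have := CStarAlgebra.spectralOrderedRing B
  have hk1 : ‖k‖ ≤ 1 := by rcases norm_eq_zero_or_one_of_tripotent hk with h | h <;> simp [h]
  have hl := mul_star_self_mul_eq_of_peirce2_eq hf hk1 hc
  have hr := mul_star_mul_self_eq_of_peirce2_eq hf hk1 hc
  have hsum : (f + (k - f)) * star (f + (k - f)) * (f + (k - f)) = f + (k - f) := by
    rwa [add_sub_cancel]
  have hd := tripotent_of_tripotent_add hf (by rw [mul_sub, hl, hf, sub_self])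
    (by rw [sub_mul, hr, ← mul_assoc, hf, sub_self]) hsum
  rcases norm_eq_zero_or_one_of_tripotent hd with h | h
  · exact .inl (sub_eq_zero.mp (norm_eq_zero.mp h))
  · exact .inr h

end Corner

lemma eq_of_norm_le_of_forall_eq_or_norm_sub_eq {E : Type*} [SeminormedAddCommGroup E]
    {W : ℂ → E} {K : ℝ} (hbd : ∀ l, ‖W l‖ ≤ K)
    (hW : ∀ l m, W l = W m ∨ ‖W l - W m‖ = ‖l - m‖) (l m : ℂ) : W l = W m := by
  have hfar : ∀ a b : ℂ, 2 * K < ‖a - b‖ → W a = W b := fun a b hab =>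
    (hW a b).resolve_right fun h => by linarith [norm_sub_le (W a) (W b), hbd a, hbd b]
  have hK : 0 ≤ K := (norm_nonneg _).trans (hbd 0)
  set ρ : ℂ := l + ((2 * K + 1 + ‖l - m‖ : ℝ) : ℂ)
  have hρl : ‖ρ - l‖ = 2 * K + 1 + ‖l - m‖ := by
    rw [add_sub_cancel_left, Complex.norm_real, Real.norm_of_nonneg (by positivity)]
  have hρm : 2 * K < ‖ρ - m‖ := by
    linarith [norm_sub_le_norm_sub_add_norm_sub ρ m l, norm_sub_rev m l]
  rw [← hfar ρ l (by linarith [norm_nonneg (l - m)]), hfar ρ m hρm]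

lemma nonpos_of_forall_sq_mul_le {s C₁ C₂ : ℝ}
    (h : ∀ r : ℝ, 0 ≤ r → r ^ 2 * s ≤ r * C₁ + C₂) : s ≤ 0 := by
  by_contra! hs
  set r := (|C₁| + |C₂| + 1) / s + 1
  have hr : r * s = |C₁| + |C₂| + 1 + s := by
    simp only [r]; field_simp
  have hr1 : 1 ≤ r := le_add_of_nonneg_left (by positivity)
  nlinarith [h r (by linarith), le_abs_self C₁, le_abs_self C₂, abs_nonneg C₂,
    mul_le_mul_of_nonneg_left (le_abs_self C₁) (by linarith : 0 ≤ r),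
    mul_le_mul_of_nonneg_right hr1 (abs_nonneg C₂)]

section TripleHom

variable {A B : Type*} [NonUnitalCStarAlgebra A] [NonUnitalCStarAlgebra B]

/-- Comparing the coefficients of `r²` in `Φ {r e + a, r e + a, x} = {r f + b, r f + b, v}`:
the other terms grow at most linearly in `r` since triple homomorphisms are contractive. -/
theorem tp_eq_smul_of_forall_exists_tripleHom {e a x : A} {f b v : B} {c : ℂ}
    (hx : tp e e x = c • x)
    (hΦ : ∀ r : ℝ, ∃ Φ : A →L[ℂ] B,
      IsTripleHom Φ ∧ Φ ((r : ℂ) • e + a) = (r : ℂ) • f + b ∧ Φ x = v) :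
    tp f f v = c • v := by
  rw [← sub_eq_zero, ← norm_le_zero_iff]
  refine nonpos_of_forall_sq_mul_le (C₁ := ‖tp e a x + tp a e x‖ + ‖tp f b v + tp b f v‖)
    (C₂ := ‖tp a a x‖ + ‖tp b b v‖) fun r hr => ?_
  obtain ⟨Φ, hΦ, hΦa, hΦx⟩ := hΦ r
  have key : ((r ^ 2 : ℝ) : ℂ) • (tp f f v - c • v)
      = (r : ℂ) • (Φ (tp e a x + tp a e x) - (tp f b v + tp b f v))
        + (Φ (tp a a x) - tp b b v) := by
    have h := hΦ ((r : ℂ) • e + a) ((r : ℂ) • e + a) x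
    rw [hΦa, hΦx, tp_ofReal_smul_add, tp_ofReal_smul_add, hx, map_add, map_add, map_smul,
      map_smul, map_smul, hΦx] at h
    linear_combination (norm := module) -h
  calc r ^ 2 * ‖tp f f v - c • v‖ = ‖((r ^ 2 : ℝ) : ℂ) • (tp f f v - c • v)‖ := by
        rw [norm_smul, Complex.norm_real, Real.norm_of_nonneg (by positivity)]
    _ ≤ r * ‖Φ (tp e a x + tp a e x) - (tp f b v + tp b f v)‖
          + ‖Φ (tp a a x) - tp b b v‖ := by
        refine (key ▸ norm_add_le _ _).trans_eq ?_
        rw [norm_smul, Complex.norm_real, Real.norm_of_nonneg hr]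
    _ ≤ r * (‖tp e a x + tp a e x‖ + ‖tp f b v + tp b f v‖)
          + (‖tp a a x‖ + ‖tp b b v‖) := by
        gcongr <;> refine (norm_sub_le _ _).trans (by gcongr; exact hΦ.norm_map_le _)

end TripleHom

namespace Is2LocalTripleHom

variable {A B : Type*} [NonUnitalCStarAlgebra A] [NonUnitalCStarAlgebra B] {T : A → B}
  {e x : A}

lemma map_tripotent (hT : Is2LocalTripleHom T) (he : e * star e * e = e) :
    T e * star (T e) * T e = T e := by
  obtain ⟨Φ, hΦ, hΦe, -⟩ := hT e e
  rw [← hΦe, ← hΦ.map_mul_star_mul_self, he]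

lemma tp_map_eq_smul (hT : Is2LocalTripleHom T) {c : ℂ} (h : tp e e x = c • x) :
    tp (T e) (T e) (T x) = c • T x := by
  obtain ⟨Φ, hΦ, hΦe, hΦx⟩ := hT e x
  rw [← hΦe, ← hΦx, ← hΦ, h, map_smul]

lemma exists_tripleHom_map_eq_sub (hT : Is2LocalTripleHom T) (e x : A) (l : ℂ) :
    ∃ Φ : A →L[ℂ] B, IsTripleHom Φ ∧ Φ e = T e ∧
      Φ x = T (l • e + x) - l • T e := by
  obtain ⟨Φ, hΦ, hΦa, hΦe⟩ := hT (l • e + x) e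
  refine ⟨Φ, hΦ, hΦe, ?_⟩
  rw [← hΦa, ← hΦe, map_add, map_smul, add_sub_cancel_left]

lemma peirce2_map_smul_add_sub_eq_zero (hT : Is2LocalTripleHom T) (he : e * star e * e = e)
    (hx : tp e e (tp e e x) = (2⁻¹ : ℂ) • tp e e x) (l : ℂ) :
    peirce2 (T e) (T (l • e + x) - l • T e) = 0 := by
  obtain ⟨Φ, hΦ, hΦe, hΦx⟩ := hT.exists_tripleHom_map_eq_sub e x l
  refine peirce2_eq_zero_of_tp_tp (hT.map_tripotent he) ?_
  rw [← hΦx, ← hΦe, ← hΦ, ← hΦ, hx, map_smul]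

lemma map_smul_add_sub_eq_or_norm_sub_eq (hT : Is2LocalTripleHom T) (he : e * star e * e = e)
    (hx : tp e e (tp e e x) = (2⁻¹ : ℂ) • tp e e x) (l m : ℂ) :
    T (l • e + x) - l • T e = T (m • e + x) - m • T e
      ∨ ‖(T (l • e + x) - l • T e) - (T (m • e + x) - m • T e)‖ = ‖l - m‖ := by
  rcases eq_or_ne l m with rfl | hlm
  · exact .inl rfl
  obtain ⟨Φ, hΦ, hΦl, hΦm⟩ := hT (l • e + x) (m • e + x)
  set f := T e
  have hdiff :
      (T (l • e + x) - l • f) - (T (m • e + x) - m • f) = (l - m) • (Φ e - f) := by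
    rw [← hΦl, ← hΦm, map_add, map_add, map_smul, map_smul]
    module
  have hc : peirce2 f (Φ e) = f := by
    have h := congrArg (peirce2 f) hdiff
    rw [map_sub, hT.peirce2_map_smul_add_sub_eq_zero he hx,
      hT.peirce2_map_smul_add_sub_eq_zero he hx, sub_self, map_smul, map_sub, eq_comm,
      smul_eq_zero, sub_eq_zero, sub_eq_zero] at h
    rw [h.resolve_left hlm, peirce2_self (hT.map_tripotent he)]
  rcases eq_or_norm_sub_eq_one_of_peirce2_eq (hT.map_tripotent he)
      (by rw [← hΦ.map_mul_star_mul_self, he]) hc with h | h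
  · left
    rw [← sub_eq_zero, hdiff, h, sub_self, smul_zero]
  · right
    rw [hdiff, norm_smul, h, mul_one]

theorem map_smul_add (hT : Is2LocalTripleHom T) (he : e * star e * e = e)
    (hx : tp e e (tp e e x) = (2⁻¹ : ℂ) • tp e e x) (l : ℂ) :
    T (l • e + x) = l • T e + T x := by
  have hbd : ∀ l : ℂ, ‖T (l • e + x) - l • T e‖ ≤ ‖x‖ := fun l => by
    obtain ⟨Φ, hΦ, -, hΦx⟩ := hT.exists_tripleHom_map_eq_sub e x l
    exact hΦx ▸ hΦ.norm_map_le x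
  have h := eq_of_norm_le_of_forall_eq_or_norm_sub_eq hbd
    (hT.map_smul_add_sub_eq_or_norm_sub_eq he hx) l 0
  rwa [zero_smul, zero_smul, zero_add, sub_zero, sub_eq_iff_eq_add'] at h

lemma tp_map_add_sub_eq_smul (hT : Is2LocalTripleHom T) {a : A} {c : ℂ}
    (ha : ∀ l : ℂ, T (l • e + a) = l • T e + T a)
    (hax : ∀ l : ℂ, T (l • e + (a + x)) = l • T e + T (a + x)) (hx : tp e e x = c • x) :
    tp (T e) (T e) (T (a + x) - T a) = c • (T (a + x) - T a) := by
  refine tp_eq_smul_of_forall_exists_tripleHom (a := a) (b := T a) hx fun r => ?_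
  obtain ⟨Φ, hΦ, hΦax, hΦa⟩ := hT ((r : ℂ) • e + (a + x)) ((r : ℂ) • e + a)
  refine ⟨Φ, hΦ, hΦa.trans (ha r), ?_⟩
  have hΦx : Φ x = Φ ((r : ℂ) • e + (a + x)) - Φ ((r : ℂ) • e + a) := by
    rw [← map_sub, add_sub_add_left_eq_sub, add_sub_cancel_left]
  rw [hΦx, hΦax, hΦa, ha, hax]
  abel

theorem map_add_of_peirce {y z : A} (hT : Is2LocalTripleHom T) (he : e * star e * e = e)
    (hy : tp e e y = (2⁻¹ : ℂ) • y) (hz : tp e e z = 0) : T (y + z) = T y + T z := by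
  have hy' : tp e e (tp e e y) = (2⁻¹ : ℂ) • tp e e y := by rw [hy, tp_smul_right, hy]
  have hz' : tp e e (tp e e z) = (2⁻¹ : ℂ) • tp e e z := by rw [hz, tp_zero_right, smul_zero]
  have hyz' := tp_tp_add_of_peirce hy hz
  have hz₀ : tp e e z = (0 : ℂ) • z := by rw [hz, zero_smul]
  have hB₁ := hT.tp_map_add_sub_eq_smul (hT.map_smul_add he hz')
    (add_comm y z ▸ hT.map_smul_add he hyz') hy
  have hB₀ := hT.tp_map_add_sub_eq_smul (hT.map_smul_add he hy') (hT.map_smul_add he hyz') hz₀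
  have hTy := hT.tp_map_eq_smul hy
  have hTz := hT.tp_map_eq_smul hz₀
  rw [add_comm z y] at hB₁
  have h₁ :
      tp (T e) (T e) (T (y + z) - T y - T z) = (2⁻¹ : ℂ) • (T (y + z) - T y - T z) := by
    rw [sub_right_comm, tp_sub_right, hB₁, hTy, smul_sub (2⁻¹ : ℂ) _ (T y)]
  have h₀ : tp (T e) (T e) (T (y + z) - T y - T z) = 0 := by
    rw [tp_sub_right, hB₀, hTz, zero_smul, zero_smul, sub_zero]
  have h := h₁.symm.trans h₀
  rw [smul_eq_zero, sub_sub, sub_eq_zero] at h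
  exact h.resolve_left (by norm_num)

theorem map_smul_add_add_of_peirce {y z : A} (hT : Is2LocalTripleHom T) (he : e * star e * e = e)
    (hy : tp e e y = (2⁻¹ : ℂ) • y) (hz : tp e e z = 0) (l : ℂ) :
    T (l • e + y + z) = l • T e + T y + T z := by
  rw [add_assoc, hT.map_smul_add he (tp_tp_add_of_peirce hy hz), hT.map_add_of_peirce he hy hz,
    add_assoc]

end Is2LocalTripleHom

/-- For a 2-local triple homomorphism from a von Neumann algebra, a tripotent `e`,
`y` in the Peirce-1 space and `z` in the Peirce-0 space of `e`:
`T (l • e + y + z) = l • T e + T y + T z` for all `l : ℂ`; in particular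
`T (y + z) = T y + T z`. -/
theorem twoLocal_tripleHom_vonNeumann_peirce_additivity
    {H : Type*} [NormedAddCommGroup H] [InnerProductSpace ℂ H] [CompleteSpace H]
    (M : VonNeumannAlgebra H) {B : Type*} [NonUnitalCStarAlgebra B]
    (T : M → B) (hT : Is2LocalTripleHom T)
    (e y z : M) (he : e * star e * e = e)
    (hy : tp e e y = (2⁻¹ : ℂ) • y) (hz : tp e e z = 0) :
    (∀ l : ℂ, T (l • e + y + z) = l • T e + T y + T z) ∧
    T (y + z) = T y + T z :=
  ⟨hT.map_smul_add_add_of_peirce he hy hz, hT.map_add_of_peirce he hy hz⟩
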